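/- There exists no function Ψ: [0,∞) → ℝ such that [det(dev₃ log U)]² = Ψ(‖dev₃ log U‖²) for all F ∈ GL⁺(3), where U = √(FᵀF). Specifically, for U₁ = diag(e, e, e⁻²) and U₂ = diag(e^{√3}, 1, e^{−√3}) one has ‖dev₃ log U₁‖² = ‖dev₃ log U₂‖² = 6, while [det(dev₃ log U₁)]² = 4 and [det(dev₃ log U₂)]² = 0. -/

import Mathlib

open Matrix Real

attribute [local instance] Matrix.frobeniusNormedAddCommGroup Matrix.frobeniusNormedSpace

noncomputable section

/-- The space of real `n × n` matrices. -/
abbrev Mat (n : ℕ) := Matrix (Fin n) (Fin n) ℝ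

/-- `GL⁺(n)`: real `n × n` matrices with positive determinant. -/
def GLp (n : ℕ) : Set (Mat n) := {F | 0 < F.det}

/-- Frobenius inner product `⟨X, Y⟩ = tr (X Yᵀ)`. -/
def inn {n : ℕ} (X Y : Mat n) : ℝ := (X * Yᵀ).trace

/-- Squared Frobenius norm `‖X‖² = tr (Xᵀ X)`. -/
def nsq {n : ℕ} (X : Mat n) : ℝ := (Xᵀ * X).trace

/-- The primary matrix function associated to `f : ℝ → ℝ`: applies `f` to the eigenvalues
in a spectral decomposition of a Hermitian (i.e. real symmetric) matrix, junk value `0`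
otherwise. -/
def matFun {n : ℕ} (f : ℝ → ℝ) (A : Mat n) : Mat n :=
  if hA : A.IsHermitian then
    (hA.eigenvectorUnitary : Mat n) * Matrix.diagonal (f ∘ hA.eigenvalues) *
      (star (hA.eigenvectorUnitary : Mat n))
  else 0

/-- Principal square root of a symmetric positive semidefinite matrix. -/
def matSqrt {n : ℕ} (A : Mat n) : Mat n := matFun Real.sqrt A

/-- Principal matrix logarithm of a symmetric positive definite matrix. -/
def matLog {n : ℕ} (A : Mat n) : Mat n := matFun Real.log A

/-- `log U` where `U = √(FᵀF)` is the right stretch tensor of `F`. -/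
def logU {n : ℕ} (F : Mat n) : Mat n := matLog (matSqrt (Fᵀ * F))

/-- `log V` where `V = √(FFᵀ)` is the left stretch tensor of `F`. -/
def logV {n : ℕ} (F : Mat n) : Mat n := matLog (matSqrt (F * Fᵀ))

/-- Deviatoric (trace-free) part `dev_n X = X - (tr X / n) 𝟙`. -/
def dev {n : ℕ} (X : Mat n) : Mat n := X - (X.trace / n) • (1 : Mat n)

/-- Rank-one convexity of `W : GL⁺(n) → ℝ`: along every rank-one line segment contained in
`GL⁺(n)`, the function is convex. -/
def RankOneConvex {n : ℕ} (W : Mat n → ℝ) : Prop :=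
  ∀ F ∈ GLp n, ∀ ξ η : Fin n → ℝ, ∀ I : Set ℝ, Convex ℝ I →
    (∀ t ∈ I, 0 < (F + t • vecMulVec ξ η).det) →
    ConvexOn ℝ I (fun t => W (F + t • vecMulVec ξ η))

end

/-!
For a diagonal stretch `U = diag(exp v)` with `∑ vᵢ = 0`, the logarithm `log U = diag v` is
already trace-free, so `‖dev₃ log U‖² = ∑ vᵢ²` and `det (dev₃ log U) = ∏ vᵢ`. The exponent
vectors `(1, 1, -2)` and `(√3, 0, -√3)` have the same squared norm `6` but products `-2` and `0`.
-/

lemma Matrix.aeval_diagonal {n R : Type*} [Fintype n] [DecidableEq n] [CommRing R]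
    (p : Polynomial R) (d : n → R) :
    Polynomial.aeval (diagonal d) p = diagonal fun i => p.eval (d i) := by
  rw [← diagonalAlgHom_apply (R := R), Polynomial.aeval_algHom_apply, diagonalAlgHom_apply,
    Polynomial.aeval_pi_apply]
  simp only [Polynomial.coe_aeval_eq_eval]

lemma matFun_eq_cfc {n : ℕ} (f : ℝ → ℝ) {A : Mat n} (hA : A.IsHermitian) :
    matFun f A = cfc f A := by
  rw [matFun, dif_pos hA, hA.cfc_eq]
  simp [IsHermitian.cfc, Function.comp_def]

lemma matFun_diagonal {n : ℕ} (f : ℝ → ℝ) (d : Fin n → ℝ) :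
    matFun f (diagonal d) = diagonal (f ∘ d) := by
  -- On the finite spectrum, `f` agrees with its Lagrange interpolating polynomial.
  set p := Lagrange.interpolate (Finset.univ.image d) id f
  have hp : ∀ i, p.eval (d i) = f (d i) := fun i =>
    Lagrange.eval_interpolate_at_node f (Set.injOn_id _) (Finset.mem_image_of_mem d (by simp))
  have hcongr : cfc f (diagonal d) = cfc p.eval (diagonal d) := by
    refine cfc_congr fun x hx => ?_
    obtain ⟨i, rfl⟩ := (spectrum_diagonal d).subset hx
    exact (hp i).symm
  rw [matFun_eq_cfc f (isHermitian_diagonal d), hcongr,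
    cfc_polynomial p _ (isHermitian_diagonal d).isSelfAdjoint, aeval_diagonal]
  exact congrArg diagonal (funext hp)

lemma matLog_diagonal_exp {n : ℕ} (v : Fin n → ℝ) :
    matLog (diagonal (exp ∘ v)) = diagonal v := by
  rw [matLog, matFun_diagonal]
  congr 1
  funext i
  exact log_exp (v i)

lemma logU_diagonal_exp {n : ℕ} (v : Fin n → ℝ) :
    logU (diagonal (exp ∘ v)) = diagonal v := by
  rw [logU, diagonal_transpose, diagonal_mul_diagonal, matSqrt, matFun_diagonal]
  have hsqrt : (sqrt ∘ fun i => (exp ∘ v) i * (exp ∘ v) i) = exp ∘ v := by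
    funext i
    exact sqrt_mul_self (exp_pos (v i)).le
  rw [hsqrt, matLog_diagonal_exp]

lemma diagonal_exp_mem_GLp {n : ℕ} (v : Fin n → ℝ) : diagonal (exp ∘ v) ∈ GLp n := by
  show 0 < (diagonal (exp ∘ v)).det
  rw [det_diagonal]
  exact Finset.prod_pos fun i _ => exp_pos (v i)

lemma dev_eq_self_of_trace_eq_zero {n : ℕ} {X : Mat n} (hX : X.trace = 0) : dev X = X := by
  simp [dev, hX]

lemma nsq_diagonal {n : ℕ} (v : Fin n → ℝ) : nsq (diagonal v) = ∑ i, v i ^ 2 := by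
  simp [nsq, trace_diagonal, sq]

lemma dev_logU_diagonal_exp {n : ℕ} {v : Fin n → ℝ} (hv : ∑ i, v i = 0) :
    dev (logU (diagonal (exp ∘ v))) = diagonal v := by
  rw [logU_diagonal_exp, dev_eq_self_of_trace_eq_zero (by rwa [trace_diagonal])]

lemma dev_matLog_diagonal_exp {n : ℕ} {v : Fin n → ℝ} (hv : ∑ i, v i = 0) :
    dev (matLog (diagonal (exp ∘ v))) = diagonal v := by
  rw [matLog_diagonal_exp, dev_eq_self_of_trace_eq_zero (by rwa [trace_diagonal])]

/-- There is no function `Ψ : [0,∞) → ℝ` with `[det(dev₃ log U)]² = Ψ(‖dev₃ log U‖²)` for all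
`F ∈ GL⁺(3)` (where `U = √(FᵀF)`). Specifically, for `U₁ = diag(e, e, e⁻²)` and
`U₂ = diag(e^√3, 1, e^(−√3))` one has `‖dev₃ log U₁‖² = ‖dev₃ log U₂‖² = 6`, while
`[det(dev₃ log U₁)]² = 4` and `[det(dev₃ log U₂)]² = 0`. -/
theorem det_dev_log_not_function_of_norm
    (U₁ U₂ : Mat 3)
    (hU₁ : U₁ = Matrix.diagonal ![Real.exp 1, Real.exp 1, Real.exp (-2)])
    (hU₂ : U₂ = Matrix.diagonal ![Real.exp (Real.sqrt 3), 1, Real.exp (-Real.sqrt 3)]) :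
    (¬ ∃ Ψ : ℝ → ℝ, ∀ F ∈ GLp 3,
      ((dev (logU F)).det) ^ 2 = Ψ (nsq (dev (logU F)))) ∧
    nsq (dev (matLog U₁)) = 6 ∧
    nsq (dev (matLog U₂)) = 6 ∧
    ((dev (matLog U₁)).det) ^ 2 = 4 ∧
    ((dev (matLog U₂)).det) ^ 2 = 0 := by
  have hU₁' : U₁ = diagonal (exp ∘ ![1, 1, -2]) := by
    rw [hU₁]; congr 1; funext i; fin_cases i <;> simp
  have hU₂' : U₂ = diagonal (exp ∘ ![√3, 0, -√3]) := by
    rw [hU₂]; congr 1; funext i; fin_cases i <;> simp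
  obtain ⟨hv₁, hnsq₁, hdet₁⟩ : ∑ i, ![(1 : ℝ), 1, -2] i = 0 ∧
      nsq (diagonal ![(1 : ℝ), 1, -2]) = 6 ∧ (diagonal ![(1 : ℝ), 1, -2]).det ^ 2 = 4 := by
    norm_num [nsq_diagonal, det_diagonal, Fin.sum_univ_three, Fin.prod_univ_three,
      cons_val_two, tail_cons, head_cons]
  obtain ⟨hv₂, hnsq₂, hdet₂⟩ : ∑ i, ![√3, 0, -√3] i = 0 ∧
      nsq (diagonal ![√3, 0, -√3]) = 6 ∧ (diagonal ![√3, 0, -√3]).det ^ 2 = 0 := by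
    norm_num [nsq_diagonal, det_diagonal, Fin.sum_univ_three, Fin.prod_univ_three,
      cons_val_two, tail_cons, head_cons]
  rw [hU₁', hU₂', dev_matLog_diagonal_exp hv₁, dev_matLog_diagonal_exp hv₂]
  refine ⟨?_, hnsq₁, hnsq₂, hdet₁, hdet₂⟩
  rintro ⟨Ψ, hΨ⟩
  have h₁ := hΨ _ (diagonal_exp_mem_GLp ![1, 1, -2])
  have h₂ := hΨ _ (diagonal_exp_mem_GLp ![√3, 0, -√3])
  rw [dev_logU_diagonal_exp hv₁, hnsq₁, hdet₁] at h₁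
  rw [dev_logU_diagonal_exp hv₂, hnsq₂, hdet₂] at h₂
  linarith
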